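/- arXiv:1707.07004 — 6 statements merged into one kernel-verified Lean document; each statement's English description precedes it below -/
import Mathlib

section
/- Let d ≥ 1 and 1 ≤ N ≤ d. Let A : (N-subsets of Fin d) → ℂ with ∑_S |A(S)|² = 1, and let c : Fin d → ℂ with ∑_k |c(k)|² = 1. For an (N−1)-subset T of Fin d and k ∈ Fin d, define A(T ∪ {k}) := A(T ∪ {k}) if k ∉ T and 0 if k ∈ T. Then ∑_{T : (N−1)-subsets} |∑_{k=1}^d conj(A(T ∪ {k})) · c(k)|² ≤ (N/d)·(d − N + 1). -/
/-!
Write `b` for the hard-core annihilation operator of the mode `c` (it maps `(j+1)`-particle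
amplitudes to `j`-particle ones) and `b†` for its adjoint. As `‖b‖ = ‖b†‖`, it suffices to show
`‖b† χ‖² ≤ K j * ‖c‖² * ‖χ‖²` on the `j`-particle sector, `K j = (j+1)(d-j)/d`, by induction on `j`.
For hard-core bosons `b b† - b† b` is diagonal, with eigenvalue `∑_{k ∉ T} |c k|² - ∑_{k ∈ T} |c k|²`
on the configuration `T`; hence `‖b† χ‖² = ‖b χ‖² + ‖c‖² ‖χ‖² - 2 t` with
`t = ∑_T (∑_{k ∈ T} |c k|²) |χ T|²`. Cauchy–Schwarz over the `d - j` free sites gives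
`‖b χ‖² ≤ (d - j) t` for `χ` on `j + 1` particles, so `‖b† χ‖² ≤ (1 - 2/(d-j)) ‖b χ‖² + ‖c‖² ‖χ‖²`,
and the inductive bound on `‖b χ‖²` turns this into `K (j+1)`, because
`(j+1)(d-j-2) + d = (j+2)(d-j-1)`.
-/

open Finset

open ComplexConjugate

namespace HardCoreBoson

variable {ι : Type*} [Fintype ι]

noncomputable def sqNorm (j : ℕ) (A : Finset ι → ℂ) : ℝ :=
  ∑ S ∈ powersetCard j univ, ‖A S‖ ^ 2

theorem sqNorm_eq_sum_conj_mul (j : ℕ) (A : Finset ι → ℂ) :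
    (sqNorm j A : ℂ) = ∑ S ∈ powersetCard j univ, conj (A S) * A S := by
  simp [sqNorm, Complex.conj_mul']

theorem sq_norm_sum_conj_mul_le (j : ℕ) (A B : Finset ι → ℂ) :
    ‖∑ S ∈ powersetCard j univ, conj (A S) * B S‖ ^ 2 ≤ sqNorm j A * sqNorm j B := by
  have h := norm_sum_le (powersetCard j univ) fun S ↦ conj (A S) * B S
  simp only [norm_mul, Complex.norm_conj] at h
  exact (pow_le_pow_left₀ (norm_nonneg _) h 2).trans (sum_mul_sq_le_sq_mul_sq _ _ _)

variable [DecidableEq ι]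

theorem sum_powersetCard_succ_sum_erase {M : Type*} [AddCommMonoid M] (j : ℕ)
    (f : ι → Finset ι → M) :
    ∑ S ∈ powersetCard (j + 1) univ, ∑ k ∈ S, f k (S.erase k)
      = ∑ T ∈ powersetCard j univ, ∑ k ∈ Tᶜ, f k T := by
  rw [sum_sigma', sum_sigma']
  refine sum_nbij' (fun x ↦ ⟨x.1.erase x.2, x.2⟩) (fun x ↦ ⟨insert x.2 x.1, x.2⟩)
    ?_ ?_ ?_ ?_ (fun _ _ ↦ rfl)
  all_goals
    rintro ⟨S, k⟩ h
    simp only [mem_sigma, mem_powersetCard_univ, mem_compl] at h ⊢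
  · simp [card_erase_of_mem h.2, h.1]
  · simp [card_insert_of_notMem h.2, h.1]
  · simp [insert_erase h.2]
  · simp [erase_insert h.2]

variable (c : ι → ℂ)

/- Amplitudes are functions on configurations `Finset ι`; `annihilate c` is `b` and
`create c` is `b†`. -/
noncomputable def annihilate (A : Finset ι → ℂ) (T : Finset ι) : ℂ :=
  ∑ k ∈ Tᶜ, A (insert k T) * c k

noncomputable def create (χ : Finset ι → ℂ) (S : Finset ι) : ℂ :=
  ∑ k ∈ S, conj (c k) * χ (S.erase k)

theorem sum_conj_mul_create (j : ℕ) (A χ : Finset ι → ℂ) :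
    ∑ S ∈ powersetCard (j + 1) univ, conj (A S) * create c χ S
      = ∑ T ∈ powersetCard j univ, conj (annihilate c A T) * χ T := by
  simp only [create, annihilate, mul_sum, map_sum, sum_mul, map_mul]
  rw [← sum_powersetCard_succ_sum_erase j fun k T ↦ conj (A (insert k T)) * conj (c k) * χ T]
  refine sum_congr rfl fun S _ ↦ sum_congr rfl fun k hk ↦ ?_
  rw [insert_erase hk, mul_assoc]

theorem sum_conj_create_mul (j : ℕ) (A χ : Finset ι → ℂ) :
    ∑ S ∈ powersetCard (j + 1) univ, conj (create c χ S) * A S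
      = ∑ T ∈ powersetCard j univ, conj (χ T) * annihilate c A T := by
  simpa [map_sum, mul_comm] using congrArg conj (sum_conj_mul_create c j A χ)

theorem annihilate_create (χ : Finset ι → ℂ) (T : Finset ι) :
    annihilate c (create c χ) T = create c (annihilate c χ) T
      + ((∑ k ∈ Tᶜ, ‖c k‖ ^ 2 - ∑ k ∈ T, ‖c k‖ ^ 2 : ℝ) : ℂ) * χ T := by
  have hann : annihilate c (create c χ) T = (∑ k ∈ Tᶜ, conj (c k) * c k) * χ T
      + ∑ k ∈ Tᶜ, ∑ l ∈ T, conj (c l) * χ (insert k (T.erase l)) * c k := by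
    simp only [annihilate, create, sum_mul, ← sum_add_distrib]
    refine sum_congr rfl fun k hk ↦ ?_
    rw [sum_insert (mem_compl.1 hk), erase_insert (mem_compl.1 hk)]
    congr 1
    · ring
    · refine sum_congr rfl fun l hl ↦ ?_
      rw [erase_insert_of_ne (ne_of_mem_of_not_mem hl (mem_compl.1 hk)).symm]
  have hcre : create c (annihilate c χ) T = (∑ l ∈ T, conj (c l) * c l) * χ T
      + ∑ l ∈ T, ∑ k ∈ Tᶜ, conj (c l) * χ (insert k (T.erase l)) * c k := by
    simp only [annihilate, create, sum_mul, mul_sum, ← sum_add_distrib]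
    refine sum_congr rfl fun l hl ↦ ?_
    rw [compl_erase, sum_insert (by simpa using hl), insert_erase hl]
    congr 1
    · ring
    · exact sum_congr rfl fun k _ ↦ by ring
  rw [hann, hcre, sum_comm]
  push_cast
  simp only [Complex.conj_mul']
  ring

theorem sqNorm_create (j : ℕ) (χ : Finset ι → ℂ) :
    sqNorm (j + 2) (create c χ) = sqNorm j (annihilate c χ)
      + ∑ T ∈ powersetCard (j + 1) univ,
          (∑ k ∈ Tᶜ, ‖c k‖ ^ 2 - ∑ k ∈ T, ‖c k‖ ^ 2) * ‖χ T‖ ^ 2 := by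
  apply Complex.ofReal_injective
  rw [Complex.ofReal_add, sqNorm_eq_sum_conj_mul, sqNorm_eq_sum_conj_mul, sum_conj_create_mul]
  simp only [annihilate_create, mul_add, sum_add_distrib]
  congr 1
  · exact sum_conj_mul_create c j χ (annihilate c χ)
  · push_cast
    exact sum_congr rfl fun T _ ↦ by rw [← Complex.conj_mul']; ring

theorem sqNorm_annihilate_le_card_sub_mul (j : ℕ) (χ : Finset ι → ℂ) :
    sqNorm j (annihilate c χ) ≤ ((Fintype.card ι - j : ℕ) : ℝ) *
      ∑ T ∈ powersetCard (j + 1) univ, (∑ k ∈ T, ‖c k‖ ^ 2) * ‖χ T‖ ^ 2 := by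
  have hR : ∀ R ∈ powersetCard j (univ : Finset ι), ‖annihilate c χ R‖ ^ 2
      ≤ ((Fintype.card ι - j : ℕ) : ℝ) * ∑ k ∈ Rᶜ, ‖χ (insert k R) * c k‖ ^ 2 := by
    intro R hR
    rw [← mem_powersetCard_univ.1 hR, ← card_compl]
    exact (pow_le_pow_left₀ (norm_nonneg _) (norm_sum_le _ _) 2).trans sq_sum_le_card_mul_sum_sq
  refine (sum_le_sum hR).trans_eq ?_
  rw [← mul_sum, ← sum_powersetCard_succ_sum_erase j fun k R ↦ ‖χ (insert k R) * c k‖ ^ 2]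
  congr 1
  refine sum_congr rfl fun S _ ↦ ?_
  rw [sum_mul]
  exact sum_congr rfl fun k hk ↦ by rw [insert_erase hk, norm_mul]; ring

theorem sub_mul_sqNorm_create_le {j : ℕ} (hj : j ≤ Fintype.card ι) (χ : Finset ι → ℂ) :
    ((Fintype.card ι : ℝ) - j) * sqNorm (j + 2) (create c χ)
      ≤ ((Fintype.card ι : ℝ) - j - 2) * sqNorm j (annihilate c χ)
        + ((Fintype.card ι : ℝ) - j) * (∑ k, ‖c k‖ ^ 2) * sqNorm (j + 1) χ := by
  have hq := sqNorm_annihilate_le_card_sub_mul c j χ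
  have hweight : ∑ T ∈ powersetCard (j + 1) univ,
      (∑ k ∈ Tᶜ, ‖c k‖ ^ 2 - ∑ k ∈ T, ‖c k‖ ^ 2) * ‖χ T‖ ^ 2
      = (∑ k, ‖c k‖ ^ 2) * sqNorm (j + 1) χ
        - 2 * ∑ T ∈ powersetCard (j + 1) univ, (∑ k ∈ T, ‖c k‖ ^ 2) * ‖χ T‖ ^ 2 := by
    rw [sqNorm, mul_sum, mul_sum, ← sum_sub_distrib]
    refine sum_congr rfl fun T _ ↦ ?_
    rw [← sum_compl_add_sum T]
    ring
  rw [Nat.cast_sub hj] at hq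
  rw [sqNorm_create, hweight]
  linear_combination 2 * hq

theorem sqNorm_annihilate_le_of_sqNorm_create_le {j : ℕ} {C : ℝ} (hC : 0 ≤ C)
    (h : ∀ χ, sqNorm (j + 1) (create c χ) ≤ C * sqNorm j χ) (A : Finset ι → ℂ) :
    sqNorm j (annihilate c A) ≤ C * sqNorm (j + 1) A := by
  set χ := annihilate c A
  have hχ : 0 ≤ sqNorm j χ := sum_nonneg fun _ _ ↦ by positivity
  have hA : 0 ≤ sqNorm (j + 1) A := sum_nonneg fun _ _ ↦ by positivity
  have hsq : sqNorm j χ ^ 2 ≤ sqNorm (j + 1) A * (C * sqNorm j χ) := by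
    calc sqNorm j χ ^ 2 = ‖(sqNorm j χ : ℂ)‖ ^ 2 := by
          rw [Complex.norm_real, Real.norm_of_nonneg hχ]
      _ = ‖∑ S ∈ powersetCard (j + 1) univ, conj (A S) * create c χ S‖ ^ 2 := by
        rw [sqNorm_eq_sum_conj_mul, sum_conj_mul_create]
      _ ≤ sqNorm (j + 1) A * sqNorm (j + 1) (create c χ) := sq_norm_sum_conj_mul_le _ _ _
      _ ≤ sqNorm (j + 1) A * (C * sqNorm j χ) := mul_le_mul_of_nonneg_left (h χ) hA
  nlinarith [mul_nonneg hC hA]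

theorem sqNorm_create_zero (χ : Finset ι → ℂ) :
    sqNorm 1 (create c χ) = (∑ k, ‖c k‖ ^ 2) * sqNorm 0 χ := by
  simp [sqNorm, create, powersetCard_one, sum_mul, mul_pow]

theorem sqNorm_create_le {j : ℕ} (hj : j < Fintype.card ι) (χ : Finset ι → ℂ) :
    sqNorm (j + 1) (create c χ)
      ≤ (j + 1) * (Fintype.card ι - j) / Fintype.card ι * (∑ k, ‖c k‖ ^ 2) * sqNorm j χ := by
  set d : ℝ := (Fintype.card ι : ℝ)
  have hd : (0 : ℝ) < d := by simp only [d]; exact_mod_cast hj.trans_le' (Nat.zero_le j)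
  induction j generalizing χ with
  | zero => simp [sqNorm_create_zero, hd.ne']
  | succ j ih =>
    have hjd : (j : ℝ) + 2 ≤ d := by simp only [d]; exact_mod_cast hj
    have hK : 0 ≤ (j + 1) * (d - j) / d * ∑ k, ‖c k‖ ^ 2 := by
      have : (0 : ℝ) ≤ d - j := by linarith
      positivity
    have hq := sqNorm_annihilate_le_of_sqNorm_create_le c hK (ih (by omega)) χ
    have hstep := sub_mul_sqNorm_create_le c (by omega : j ≤ Fintype.card ι) χ
    have key : (d - j) * sqNorm (j + 2) (create c χ)
        ≤ (d - j) * ((j + 2) * (d - (j + 1)) / d * (∑ k, ‖c k‖ ^ 2) * sqNorm (j + 1) χ) :=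
      calc _ ≤ (d - j - 2) * sqNorm j (annihilate c χ)
            + (d - j) * (∑ k, ‖c k‖ ^ 2) * sqNorm (j + 1) χ := hstep
        _ ≤ (d - j - 2) * ((j + 1) * (d - j) / d * (∑ k, ‖c k‖ ^ 2) * sqNorm (j + 1) χ)
            + (d - j) * (∑ k, ‖c k‖ ^ 2) * sqNorm (j + 1) χ := by
          gcongr
          linarith
        _ = _ := by field_simp; ring
    calc sqNorm (j + 2) (create c χ) ≤ _ := le_of_mul_le_mul_left key (by linarith)
      _ = _ := by push_cast; ring

theorem sqNorm_annihilate_le {j : ℕ} (hj : j < Fintype.card ι) (A : Finset ι → ℂ) :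
    sqNorm j (annihilate c A)
      ≤ (j + 1) * (Fintype.card ι - j) / Fintype.card ι * (∑ k, ‖c k‖ ^ 2) * sqNorm (j + 1) A := by
  refine sqNorm_annihilate_le_of_sqNorm_create_le c ?_ (sqNorm_create_le c hj) A
  have : (j : ℝ) < Fintype.card ι := by exact_mod_cast hj
  have : (0 : ℝ) ≤ Fintype.card ι - j := by linarith
  positivity

end HardCoreBoson

open HardCoreBoson

theorem stmt0_general (d N : ℕ) (hN1 : 1 ≤ N) (hNd : N ≤ d)
    (A : Finset (Fin d) → ℂ)
    (hA : ∑ S ∈ Finset.powersetCard N (Finset.univ : Finset (Fin d)),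
        ‖A S‖ ^ 2 = 1)
    (c : Fin d → ℂ) (hc : ∑ k, ‖c k‖ ^ 2 = 1) :
    ∑ T ∈ Finset.powersetCard (N - 1) (Finset.univ : Finset (Fin d)),
      ‖∑ k, (starRingEnd ℂ) (if k ∈ T then 0 else A (insert k T)) * c k‖ ^ 2
      ≤ ((N : ℝ) / d) * ((d : ℝ) - N + 1) := by
  have hsummand (T : Finset (Fin d)) :
      ∑ k, conj (if k ∈ T then 0 else A (insert k T)) * c k
        = annihilate c (fun S ↦ conj (A S)) T := by
    rw [annihilate, ← sum_compl_add_sum T, sum_eq_zero (s := T) fun k hk ↦ by simp [hk], add_zero]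
    exact sum_congr rfl fun k hk ↦ by simp [mem_compl.1 hk]
  have hconj : sqNorm N (fun S ↦ conj (A S)) = 1 := by simpa [sqNorm] using hA
  have h := sqNorm_annihilate_le c (j := N - 1) (by rw [Fintype.card_fin]; omega) fun S ↦ conj (A S)
  rw [Nat.sub_add_cancel hN1, hconj, hc] at h
  simp only [hsummand]
  refine h.trans_eq ?_
  rw [Fintype.card_fin, Nat.cast_sub hN1]
  push_cast
  ring

theorem stmt0 (d N : ℕ) (hd : 1 ≤ d) (hN1 : 1 ≤ N) (hNd : N ≤ d)
    (A : Finset (Fin d) → ℂ)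
    (hA : ∑ S ∈ Finset.powersetCard N (Finset.univ : Finset (Fin d)),
        ‖A S‖ ^ 2 = 1)
    (c : Fin d → ℂ) (hc : ∑ k, ‖c k‖ ^ 2 = 1) :
    ∑ T ∈ Finset.powersetCard (N - 1) (Finset.univ : Finset (Fin d)),
      ‖∑ k, (starRingEnd ℂ) (if k ∈ T then 0 else A (insert k T)) * c k‖ ^ 2
      ≤ ((N : ℝ) / d) * ((d : ℝ) - N + 1) :=
  stmt0_general d N hN1 hNd A hA c hc
end

section
/- Let d ≥ 1, 1 ≤ N ≤ d, A : (N-subsets of Fin d) → ℂ with ∑_S |A(S)|² = 1, and c : Fin d → ℂ with ∑_k |c(k)|² = 1. With A(T ∪ {k}) := 0 when k ∈ T, one has ∑_{T : (N−1)-subsets} |∑_k conj(A(T ∪ {k})) c(k)|² ≤ 1 + (N−1) · ∑_{S : N-subsets} |A(S)|² · ∑_{k ∉ S} |c(k)|². -/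
/-!
Writing `T ∪ {k}` for the `(N-1)`-set `T` and `k ∉ T`, Cauchy–Schwarz in `k` bounds the `T`-th
term by `(∑_{k ∉ T} |A(T ∪ {k})|²) (∑_{l ∉ T} |c(l)|²)`. Summing over `T` and reindexing by
`S = T ∪ {k}` turns this into `∑_S |A(S)|² ∑_{k ∈ S} ∑_{l ∉ S \ {k}} |c(l)|²`, and the inner
double sum equals `∑_{k ∈ S} |c(k)|² + N ∑_{l ∉ S} |c(l)|² = 1 + (N - 1) ∑_{l ∉ S} |c(l)|²`.
-/

open Finset

lemma norm_sum_conj_mul_sq_le {ι 𝕜 : Type*} [RCLike 𝕜] (s : Finset ι) (a c : ι → 𝕜) :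
    ‖∑ k ∈ s, starRingEnd 𝕜 (a k) * c k‖ ^ 2 ≤
      (∑ k ∈ s, ‖a k‖ ^ 2) * ∑ k ∈ s, ‖c k‖ ^ 2 :=
  calc ‖∑ k ∈ s, starRingEnd 𝕜 (a k) * c k‖ ^ 2
      ≤ (∑ k ∈ s, ‖a k‖ * ‖c k‖) ^ 2 := by
        gcongr
        exact (norm_sum_le _ _).trans_eq (by simp only [norm_mul, RCLike.norm_conj])
    _ ≤ (∑ k ∈ s, ‖a k‖ ^ 2) * ∑ k ∈ s, ‖c k‖ ^ 2 := sum_mul_sq_le_sq_mul_sq s _ _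

lemma sum_powersetCard_sum_sdiff_insert {α M : Type*} [DecidableEq α] [AddCommMonoid M]
    (s : Finset α) (n : ℕ) (F : Finset α → Finset α → M) :
    ∑ T ∈ powersetCard n s, ∑ k ∈ s \ T, F (insert k T) T =
      ∑ S ∈ powersetCard (n + 1) s, ∑ k ∈ S, F S (S.erase k) := by
  rw [sum_sigma', sum_sigma']
  refine sum_nbij' (fun p ↦ ⟨insert p.2 p.1, p.2⟩) (fun p ↦ ⟨p.1.erase p.2, p.2⟩)
    ?_ ?_ ?_ ?_ ?_
  · rintro ⟨T, k⟩ hp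
    simp only [mem_sigma, mem_powersetCard, mem_sdiff] at hp ⊢
    obtain ⟨⟨hTs, hT⟩, hks, hkT⟩ := hp
    exact ⟨⟨insert_subset hks hTs, by rw [card_insert_of_notMem hkT, hT]⟩, mem_insert_self _ _⟩
  · rintro ⟨S, k⟩ hp
    simp only [mem_sigma, mem_powersetCard, mem_sdiff] at hp ⊢
    obtain ⟨⟨hSs, hS⟩, hk⟩ := hp
    exact ⟨⟨(erase_subset _ _).trans hSs, by rw [card_erase_of_mem hk, hS]; rfl⟩,
      hSs hk, notMem_erase _ _⟩
  · rintro ⟨T, k⟩ hp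
    simp only [mem_sigma, mem_sdiff] at hp
    simp [erase_insert hp.2.2]
  · rintro ⟨S, k⟩ hp
    simp only [mem_sigma] at hp
    simp [insert_erase hp.2]
  · rintro ⟨T, k⟩ hp
    simp only [mem_sigma, mem_sdiff] at hp
    simp [erase_insert hp.2.2]

lemma sum_sum_sdiff_erase {α M : Type*} [Fintype α] [DecidableEq α] [AddCommMonoid M]
    (S : Finset α) (f : α → M) :
    ∑ k ∈ S, ∑ l ∈ univ \ S.erase k, f l = ∑ k ∈ S, f k + #S • ∑ l ∈ univ \ S, f l := by
  rw [sum_congr rfl fun k hk ↦ by rw [sdiff_erase (mem_univ k),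
    sum_insert (notMem_sdiff_of_mem_right hk)], sum_add_distrib, sum_const]

theorem stmt1_general (d N : ℕ) (hN1 : 1 ≤ N)
    (A : Finset (Fin d) → ℂ)
    (hA : ∑ S ∈ Finset.powersetCard N (Finset.univ : Finset (Fin d)),
        ‖A S‖ ^ 2 = 1)
    (c : Fin d → ℂ) (hc : ∑ k, ‖c k‖ ^ 2 = 1) :
    ∑ T ∈ Finset.powersetCard (N - 1) (Finset.univ : Finset (Fin d)),
      ‖∑ k, (starRingEnd ℂ) (if k ∈ T then 0 else A (insert k T)) * c k‖ ^ 2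
      ≤ 1 + ((N : ℝ) - 1) *
        ∑ S ∈ Finset.powersetCard N (Finset.univ : Finset (Fin d)),
          ‖A S‖ ^ 2 * ∑ k ∈ (Finset.univ : Finset (Fin d)) \ S,
            ‖c k‖ ^ 2 := by
  obtain ⟨n, rfl⟩ : ∃ n, N = n + 1 := Nat.exists_eq_add_of_le' hN1
  have hsum_outside (T : Finset (Fin d)) :
      ∑ k, starRingEnd ℂ (if k ∈ T then 0 else A (insert k T)) * c k =
        ∑ k ∈ univ \ T, starRingEnd ℂ (A (insert k T)) * c k := by
    simp only [apply_ite (starRingEnd ℂ), map_zero, ite_mul, zero_mul, sum_ite, sum_const_zero,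
      zero_add, filter_notMem_eq_sdiff]
  have hinner (S : Finset (Fin d)) (hS : S ∈ powersetCard (n + 1) univ) :
      ∑ k ∈ S, ∑ l ∈ univ \ S.erase k, ‖c l‖ ^ 2 = 1 + n * ∑ l ∈ univ \ S, ‖c l‖ ^ 2 := by
    have hsplit := sum_sdiff (f := fun k ↦ ‖c k‖ ^ 2) (subset_univ S)
    rw [sum_sum_sdiff_erase, (mem_powersetCard.1 hS).2, nsmul_eq_mul]
    push_cast
    linarith
  calc
    _ ≤ ∑ T ∈ powersetCard n univ,
          ∑ k ∈ univ \ T, ‖A (insert k T)‖ ^ 2 * ∑ l ∈ univ \ T, ‖c l‖ ^ 2 := by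
      rw [Nat.add_sub_cancel]
      exact sum_le_sum fun T _ ↦ by
        rw [hsum_outside, ← sum_mul]
        exact norm_sum_conj_mul_sq_le _ _ _
    _ = ∑ S ∈ powersetCard (n + 1) univ,
          ∑ k ∈ S, ‖A S‖ ^ 2 * ∑ l ∈ univ \ S.erase k, ‖c l‖ ^ 2 :=
      sum_powersetCard_sum_sdiff_insert univ n fun S T ↦ ‖A S‖ ^ 2 * ∑ l ∈ univ \ T, ‖c l‖ ^ 2
    _ = ∑ S ∈ powersetCard (n + 1) univ, ‖A S‖ ^ 2 * (1 + n * ∑ l ∈ univ \ S, ‖c l‖ ^ 2) :=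
      sum_congr rfl fun S hS ↦ by rw [← mul_sum, hinner S hS]
    _ = _ := by
      simp only [mul_add, mul_one, sum_add_distrib, hA, mul_sum, Nat.cast_add, Nat.cast_one,
        add_sub_cancel_right, mul_left_comm]

theorem stmt1 (d N : ℕ) (hd : 1 ≤ d) (hN1 : 1 ≤ N) (hNd : N ≤ d)
    (A : Finset (Fin d) → ℂ)
    (hA : ∑ S ∈ Finset.powersetCard N (Finset.univ : Finset (Fin d)),
        ‖A S‖ ^ 2 = 1)
    (c : Fin d → ℂ) (hc : ∑ k, ‖c k‖ ^ 2 = 1) :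
    ∑ T ∈ Finset.powersetCard (N - 1) (Finset.univ : Finset (Fin d)),
      ‖∑ k, (starRingEnd ℂ) (if k ∈ T then 0 else A (insert k T)) * c k‖ ^ 2
      ≤ 1 + ((N : ℝ) - 1) *
        ∑ S ∈ Finset.powersetCard N (Finset.univ : Finset (Fin d)),
          ‖A S‖ ^ 2 * ∑ k ∈ (Finset.univ : Finset (Fin d)) \ S,
            ‖c k‖ ^ 2 :=
  stmt1_general d N hN1 A hA c hc
end

section
/- Let d ≥ 1 and 1 ≤ N ≤ d. Define c(k) := 1/√d for all k ∈ Fin d and A(S) := 1/√(C(d,N)) for every N-subset S of Fin d (binomial coefficient C(d,N)). Then, with A(T∪{k}) := 0 for k ∈ T, one has ∑_{T : (N−1)-subsets of Fin d} |∑_k A(T ∪ {k}) · c(k)|² = (N/d)·(d − N + 1). -/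
open Finset

/-! Each of the C(d, N-1) sets T has exactly d - N + 1 completions T ∪ {k}, each contributing
1/√(C(d,N) d) to the inner sum, and C(d, N-1) (d - N + 1) = N C(d, N). -/
theorem Finset.sum_ite_mem_zero_const {α M : Type*} [Fintype α] [DecidableEq α] [AddCommMonoid M]
    (T : Finset α) (x : M) :
    ∑ k, (if k ∈ T then 0 else x) = (Fintype.card α - #T) • x := by
  rw [sum_ite, sum_const_zero, zero_add, sum_const, filter_not, filter_mem_eq_inter,
    univ_inter, ← compl_eq_univ_sdiff, card_compl]

theorem Nat.choose_pred_mul_sub_add_one {n k : ℕ} (hk : 1 ≤ k) (hkn : k ≤ n) :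
    n.choose (k - 1) * (n - k + 1) = n.choose k * k := by
  have h := choose_succ_right_eq n (k - 1)
  rw [Nat.sub_add_cancel hk] at h
  rw [h, show n - (k - 1) = n - k + 1 by omega]

theorem stmt4_general (d N : ℕ) (hN1 : 1 ≤ N) (hNd : N ≤ d)
    (A : Finset (Fin d) → ℂ) (hA : ∀ S, A S = (1 / Real.sqrt (d.choose N) : ℝ))
    (c : Fin d → ℂ) (hc : ∀ k, c k = (1 / Real.sqrt d : ℝ)) :
    ∑ T ∈ Finset.powersetCard (N - 1) (Finset.univ : Finset (Fin d)),
      ‖∑ k, (if k ∈ T then 0 else A (insert k T)) * c k‖ ^ 2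
      = ((N : ℝ) / d) * ((d : ℝ) - N + 1) := by
  have hchoose : (0 : ℝ) < d.choose N := by exact_mod_cast Nat.choose_pos hNd
  have hd : (0 : ℝ) < d := by exact_mod_cast hN1.trans hNd
  have hcast : ((d - N + 1 : ℕ) : ℝ) = d - N + 1 := by push_cast [Nat.cast_sub hNd]; ring
  have hinner : ∀ T ∈ powersetCard (N - 1) (univ : Finset (Fin d)),
      ‖∑ k, (if k ∈ T then 0 else A (insert k T)) * c k‖ ^ 2
        = ((d : ℝ) - N + 1) ^ 2 / (d.choose N * d) := by
    intro T hT
    rw [mem_powersetCard_univ] at hT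
    simp only [hA, hc, ite_mul, zero_mul, sum_ite_mem_zero_const, Fintype.card_fin, hT,
      show d - (N - 1) = d - N + 1 by omega, nsmul_eq_mul, norm_mul, Complex.norm_natCast,
      Complex.norm_real, hcast, Real.norm_eq_abs, mul_pow, sq_abs, div_pow, one_pow,
      Real.sq_sqrt hchoose.le, Real.sq_sqrt hd.le]
    field_simp
  rw [sum_congr rfl hinner, sum_const, card_powersetCard, card_univ, Fintype.card_fin,
    nsmul_eq_mul]
  have hpascal : (d.choose (N - 1) : ℝ) * (d - N + 1) = d.choose N * N := by
    rw [← hcast]; exact_mod_cast Nat.choose_pred_mul_sub_add_one hN1 hNd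
  field_simp
  linear_combination (d - N + 1 : ℝ) * hpascal

theorem stmt4 (d N : ℕ) (hd : 1 ≤ d) (hN1 : 1 ≤ N) (hNd : N ≤ d)
    (A : Finset (Fin d) → ℂ) (hA : ∀ S, A S = (1 / Real.sqrt (d.choose N) : ℝ))
    (c : Fin d → ℂ) (hc : ∀ k, c k = (1 / Real.sqrt d : ℝ)) :
    ∑ T ∈ Finset.powersetCard (N - 1) (Finset.univ : Finset (Fin d)),
      ‖∑ k, (if k ∈ T then 0 else A (insert k T)) * c k‖ ^ 2
      = ((N : ℝ) / d) * ((d : ℝ) - N + 1) :=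
  stmt4_general d N hN1 hNd A hA c hc
end

section
/- Fix 0 < n < 1 and let N, d → ∞ with N/(d+1) = n fixed (along a sequence where this is possible). With a = (N/d)(d−N+1) and b = ((N−1)/d)(d−N+2), the largest eigenvalue λ₊ of the matrix (1/2)[[1, √a],[√a, a+b]] satisfies λ₊ / N → 1 − n, and the smaller eigenvalue λ₋ satisfies λ₋ → 1/4. -/
/-!
The spectrum of a `2 × 2` matrix `M`, the root set of `x² - (tr M) x + det M`, is symmetric
under `x ↦ tr M - x`, so its extreme points satisfy `λ₊ + λ₋ = tr M = (1 + a + b) / 2` and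
`λ₊ λ₋ = det M = b / 4`. Evaluating the characteristic polynomial at the diagonal entry `1 / 2` gives
`-a / 4 ≤ 0`, whence `λ₋ ∈ [0, 1/2]` and `λ₊` lies within `1 / 2` of `(a + b) / 2`. Since
`a / N → 1 - n` and `b / N → 1 - n`, this gives `λ₊ / N → 1 - n`, and then
`λ₋ = (b / N) / (4 λ₊ / N) → 1 / 4`.
-/

open Matrix Filter Topology

theorem Matrix.mem_spectrum_iff_fin_two {K : Type*} [Field K] (A : Matrix (Fin 2) (Fin 2) K)
    (x : K) : x ∈ spectrum K A ↔ x ^ 2 - A.trace * x + A.det = 0 := by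
  rw [mem_spectrum_iff_isRoot_charpoly, charpoly_fin_two]
  simp

theorem add_eq_and_mul_eq_of_isGreatest_of_isLeast {R : Type*} [CommRing R] [LinearOrder R]
    [IsStrictOrderedRing R] {s p lp lm : R}
    (hlp : IsGreatest {x | x ^ 2 - s * x + p = 0} lp)
    (hlm : IsLeast {x | x ^ 2 - s * x + p = 0} lm) :
    lp + lm = s ∧ lp * lm = p := by
  have hreflect : ∀ x ∈ {x | x ^ 2 - s * x + p = 0}, s - x ∈ {x | x ^ 2 - s * x + p = 0} := by
    intro x hx
    simp only [Set.mem_ofPred_eq] at hx ⊢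
    linear_combination hx
  have hlm_le : lm ≤ s - lp := hlm.2 (hreflect lp hlp.1)
  have hle_lp : s - lm ≤ lp := hlp.2 (hreflect lm hlm.1)
  have hsum : lp + lm = s := by linarith
  refine ⟨hsum, ?_⟩
  have hroot : lp ^ 2 - s * lp + p = 0 := hlp.1
  linear_combination -hroot + lp * hsum

theorem Matrix.add_eq_trace_and_mul_eq_det_of_isGreatest_of_isLeast {K : Type*} [Field K]
    [LinearOrder K] [IsStrictOrderedRing K] {A : Matrix (Fin 2) (Fin 2) K} {lp lm : K}
    (hlp : IsGreatest (spectrum K A) lp) (hlm : IsLeast (spectrum K A) lm) :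
    lp + lm = A.trace ∧ lp * lm = A.det := by
  have hspec : spectrum K A = {x | x ^ 2 - A.trace * x + A.det = 0} :=
    Set.ext A.mem_spectrum_iff_fin_two
  rw [hspec] at hlp hlm
  exact add_eq_and_mul_eq_of_isGreatest_of_isLeast hlp hlm

theorem half_le_and_mem_Icc_of_add_eq_of_mul_eq {a b lp lm : ℝ} (ha : 0 ≤ a) (hb : 0 ≤ b)
    (hle : lm ≤ lp) (hsum : lp + lm = (1 + a + b) / 2) (hprod : lp * lm = b / 4) :
    1 / 2 ≤ lp ∧ lp ∈ Set.Icc ((a + b) / 2) ((1 + a + b) / 2) := by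
  have hhalf : (1 / 2 - lp) * (1 / 2 - lm) = -(a / 4) := by
    linear_combination hprod - hsum / 2
  have hlp : 1 / 2 ≤ lp := by nlinarith
  have hlm : 0 ≤ lm := by nlinarith
  have hlm_le : lm ≤ 1 / 2 := by nlinarith
  exact ⟨hlp, by linarith, by linarith⟩

theorem tendsto_of_add_eq_of_mul_eq {ι : Type*} {l : Filter ι} {N a b lp lm : ι → ℝ} {c : ℝ}
    (hc : c ≠ 0) (hN : Tendsto N l atTop) (ha : Tendsto (fun j => a j / N j) l (𝓝 c))
    (hb : Tendsto (fun j => b j / N j) l (𝓝 c))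
    (ha0 : ∀ j, 0 ≤ a j) (hb0 : ∀ j, 0 ≤ b j) (hle : ∀ j, lm j ≤ lp j)
    (hsum : ∀ j, lp j + lm j = (1 + a j + b j) / 2) (hprod : ∀ j, lp j * lm j = b j / 4) :
    Tendsto (fun j => lp j / N j) l (𝓝 c) ∧ Tendsto lm l (𝓝 (1 / 4)) := by
  have hbounds j :=
    half_le_and_mem_Icc_of_add_eq_of_mul_eq (ha0 j) (hb0 j) (hle j) (hsum j) (hprod j)
  have hNpos : ∀ᶠ j in l, 0 < N j := hN.eventually_gt_atTop 0
  have hlower : Tendsto (fun j => (a j + b j) / 2 / N j) l (𝓝 c) := by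
    simpa using ((ha.add hb).div_const 2).congr fun j => by ring
  have hupper : Tendsto (fun j => (1 + a j + b j) / 2 / N j) l (𝓝 c) := by
    simpa using (((hN.inv_tendsto_atTop.add ha).add hb).div_const 2).congr fun j => by
      rw [Pi.inv_apply]; ring
  have hlpN : Tendsto (fun j => lp j / N j) l (𝓝 c) := by
    refine tendsto_of_tendsto_of_tendsto_of_le_of_le' hlower hupper ?_ ?_ <;>
      filter_upwards [hNpos] with j hj
    · exact div_le_div_of_nonneg_right (hbounds j).2.1 hj.le
    · exact div_le_div_of_nonneg_right (hbounds j).2.2 hj.le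
  refine ⟨hlpN, ?_⟩
  have hlm : Tendsto (fun j => b j / N j / (4 * (lp j / N j))) l (𝓝 (c / (4 * c))) :=
    hb.div (hlpN.const_mul 4) (mul_ne_zero four_ne_zero hc)
  rw [show c / (4 * c) = 1 / 4 by field_simp] at hlm
  refine hlm.congr' ?_
  filter_upwards [hNpos] with j hj
  have hlp_pos : 0 < lp j := one_half_pos.trans_le (hbounds j).1
  field_simp
  linarith [hprod j]

theorem tendsto_star_coeffs {ι : Type*} {l : Filter ι} {n : ℝ} (hn : 0 < n) {N d : ι → ℝ}
    (hd : Tendsto d l atTop) (hN : ∀ j, N j = n * (d j + 1)) :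
    Tendsto N l atTop ∧
    Tendsto (fun j => N j / d j * (d j - N j + 1) / N j) l (𝓝 (1 - n)) ∧
    Tendsto (fun j => (N j - 1) / d j * (d j - N j + 2) / N j) l (𝓝 (1 - n)) := by
  have hNtop : Tendsto N l atTop := by
    rw [funext hN]
    exact (tendsto_atTop_add_const_right l 1 hd).const_mul_atTop hn
  have hdpos : ∀ᶠ j in l, 0 < d j := hd.eventually_gt_atTop 0
  have hdinv := hd.inv_tendsto_atTop
  have hNinv := hNtop.inv_tendsto_atTop
  refine ⟨hNtop, ?_, ?_⟩
  · have h : Tendsto (fun j => (1 - n) * (1 + (d j)⁻¹)) l (𝓝 (1 - n)) := by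
      simpa using (hdinv.const_add 1).const_mul (1 - n)
    refine h.congr' ?_
    filter_upwards [hdpos] with j hj
    have : N j ≠ 0 := by rw [hN]; positivity
    rw [hN] at this ⊢
    field_simp
    ring
  · have h : Tendsto (fun j => (1 - (N j)⁻¹) * ((1 - n) * (1 + (d j)⁻¹) + (d j)⁻¹)) l
        (𝓝 (1 - n)) := by
      simpa using (hNinv.const_sub 1).mul (((hdinv.const_add 1).const_mul (1 - n)).add hdinv)
    refine h.congr' ?_
    filter_upwards [hdpos] with j hj
    have : N j ≠ 0 := by rw [hN]; positivity
    rw [hN] at this ⊢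
    field_simp
    ring

theorem trace_det_star {a b : ℝ} (ha : 0 ≤ a) :
    ((1 / 2 : ℝ) • !![1, √a; √a, a + b]).trace = (1 + a + b) / 2 ∧
    ((1 / 2 : ℝ) • !![1, √a; √a, a + b]).det = b / 4 := by
  simp only [trace_fin_two, det_fin_two, Matrix.smul_apply, of_apply, cons_val', cons_val_zero,
    cons_val_one, empty_val', cons_val_fin_one, smul_eq_mul]
  constructor
  · ring
  · linear_combination (-1 / 4 : ℝ) * Real.mul_self_sqrt ha

theorem star_coeffs_nonneg {n : ℝ} (hn0 : 0 < n) (hn1 : n < 1) {N d : ℕ}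
    (hN : (N : ℝ) = n * (d + 1)) :
    0 ≤ (N : ℝ) / d * (d - N + 1) ∧ 0 ≤ ((N : ℝ) - 1) / d * (d - N + 2) := by
  have hN1 : (1 : ℝ) ≤ N := by
    have : (0 : ℝ) < N := by rw [hN]; positivity
    exact Nat.one_le_cast.2 (by exact_mod_cast this)
  have hgap : (d : ℝ) - N + 1 = (1 - n) * (d + 1) := by rw [hN]; ring
  have hgap_nonneg : 0 ≤ (d : ℝ) - N + 1 := by rw [hgap]; nlinarith
  exact ⟨by positivity, mul_nonneg (div_nonneg (by linarith) d.cast_nonneg) (by linarith)⟩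

theorem stmt10_general (n : ℝ) (hn0 : 0 < n) (hn1 : n < 1)
    (Nseq dseq : ℕ → ℕ)
    (hdtop : Tendsto (fun j => (dseq j : ℝ)) atTop atTop)
    (hfix : ∀ j, (Nseq j : ℝ) / ((dseq j : ℝ) + 1) = n)
    (a b : ℕ → ℝ)
    (ha : ∀ j, a j = ((Nseq j : ℝ) / dseq j) * ((dseq j : ℝ) - Nseq j + 1))
    (hb : ∀ j, b j = (((Nseq j : ℝ) - 1) / dseq j) * ((dseq j : ℝ) - Nseq j + 2))
    (M : ℕ → Matrix (Fin 2) (Fin 2) ℝ)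
    (hM : ∀ j, M j = (1 / 2 : ℝ) • !![1, Real.sqrt (a j); Real.sqrt (a j), a j + b j])
    (lp lm : ℕ → ℝ)
    (hlp : ∀ j, lp j ∈ spectrum ℝ (M j) ∧ ∀ μ ∈ spectrum ℝ (M j), μ ≤ lp j)
    (hlm : ∀ j, lm j ∈ spectrum ℝ (M j) ∧ ∀ μ ∈ spectrum ℝ (M j), lm j ≤ μ) :
    Tendsto (fun j => lp j / (Nseq j : ℝ)) atTop (nhds (1 - n)) ∧
    Tendsto (fun j => lm j) atTop (nhds (1 / 4)) := by
  have hN j : (Nseq j : ℝ) = n * (dseq j + 1) := by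
    rw [← hfix j, div_mul_cancel₀ _ (by positivity)]
  have hnonneg j : 0 ≤ a j ∧ 0 ≤ b j := by
    rw [ha, hb]; exact star_coeffs_nonneg hn0 hn1 (hN j)
  have hvieta j : lp j + lm j = (1 + a j + b j) / 2 ∧ lp j * lm j = b j / 4 := by
    rw [← (trace_det_star (b := b j) (hnonneg j).1).1, ← (trace_det_star (hnonneg j).1).2, ← hM]
    exact add_eq_trace_and_mul_eq_det_of_isGreatest_of_isLeast (hlp j) (hlm j)
  obtain ⟨hNtop, haN, hbN⟩ := tendsto_star_coeffs hn0 hdtop hN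
  exact tendsto_of_add_eq_of_mul_eq (sub_ne_zero.2 hn1.ne') hNtop
    (haN.congr fun j => by rw [ha]) (hbN.congr fun j => by rw [hb])
    (fun j => (hnonneg j).1) (fun j => (hnonneg j).2) (fun j => (hlm j).2 _ (hlp j).1)
    (fun j => (hvieta j).1) (fun j => (hvieta j).2)

theorem stmt10 (n : ℝ) (hn0 : 0 < n) (hn1 : n < 1)
    (Nseq dseq : ℕ → ℕ) (hNpos : ∀ j, 0 < Nseq j)
    (hdtop : Tendsto (fun j => (dseq j : ℝ)) atTop atTop)
    (hfix : ∀ j, (Nseq j : ℝ) / ((dseq j : ℝ) + 1) = n)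
    (a b : ℕ → ℝ)
    (ha : ∀ j, a j = ((Nseq j : ℝ) / dseq j) * ((dseq j : ℝ) - Nseq j + 1))
    (hb : ∀ j, b j = (((Nseq j : ℝ) - 1) / dseq j) * ((dseq j : ℝ) - Nseq j + 2))
    (M : ℕ → Matrix (Fin 2) (Fin 2) ℝ)
    (hM : ∀ j, M j = (1 / 2 : ℝ) • !![1, Real.sqrt (a j); Real.sqrt (a j), a j + b j])
    (lp lm : ℕ → ℝ)
    (hlp : ∀ j, lp j ∈ spectrum ℝ (M j) ∧ ∀ μ ∈ spectrum ℝ (M j), μ ≤ lp j)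
    (hlm : ∀ j, lm j ∈ spectrum ℝ (M j) ∧ ∀ μ ∈ spectrum ℝ (M j), lm j ≤ μ) :
    Tendsto (fun j => lp j / (Nseq j : ℝ)) atTop (nhds (1 - n)) ∧
    Tendsto (fun j => lm j) atTop (nhds (1 / 4)) :=
  stmt10_general n hn0 hn1 Nseq dseq hdtop hfix a b ha hb M hM lp lm hlp hlm
end

section
/- For integers d_A ≥ 1 odd and d ≥ 2·d_A, with N := (d+1)/2 when d is odd (or more generally any N with N − (d − d_A) ≤ (d_A+1)/2 ≤ min(N, d_A)), the maximal occupation number within a sublattice of d_A sites equals N_max^{(L_A)} = (d_A + 1)²/(4 d_A), attained at local particle number N̄_A = (d_A + 1)/2. -/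
open Finset

theorem stmt15 (dA d N : ℕ) (hdA : 1 ≤ dA) (hodd : Odd dA) (hd : 2 * dA ≤ d)
    (hN1 : 1 ≤ N) (hNd : N ≤ d)
    (hlo : N - (d - dA) ≤ (dA + 1) / 2) (hhiN : (dA + 1) / 2 ≤ N)
    (hhidA : (dA + 1) / 2 ≤ dA) :
    (Finset.Icc (max 0 (N - (d - dA))) (min N dA)).sup'
        (Finset.nonempty_Icc.mpr (by omega))
        (fun m => ((m : ℝ) / dA) * ((dA : ℝ) - m + 1))
      = ((dA : ℝ) + 1) ^ 2 / (4 * dA) ∧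
    (dA + 1) / 2 ∈ Finset.Icc (max 0 (N - (d - dA))) (min N dA) ∧
    ((((dA + 1) / 2 : ℕ) : ℝ) / dA) * ((dA : ℝ) - (((dA + 1) / 2 : ℕ) : ℝ) + 1)
      = ((dA : ℝ) + 1) ^ 2 / (4 * dA) := by
  obtain ⟨t, ht⟩ := hodd
  have hk : (dA + 1) / 2 = t + 1 := by omega
  have hmem : (dA + 1) / 2 ∈ Finset.Icc (max 0 (N - (d - dA))) (min N dA) := by
    simp only [Finset.mem_Icc]
    omega
  have hdA0 : (0 : ℝ) < dA := by positivity
  have hval : ((((dA + 1) / 2 : ℕ) : ℝ) / dA) * ((dA : ℝ) - (((dA + 1) / 2 : ℕ) : ℝ) + 1)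
      = ((dA : ℝ) + 1) ^ 2 / (4 * dA) := by
    have hdr : (dA : ℝ) = 2 * t + 1 := by rw [ht]; push_cast; ring
    rw [hk]
    push_cast
    rw [hdr]
    field_simp
    ring
  refine ⟨?_, hmem, hval⟩
  apply le_antisymm
  · apply Finset.sup'_le
    intro m hm
    rw [div_mul_eq_mul_div, div_le_div_iff₀ hdA0 (by positivity)]
    nlinarith [sq_nonneg ((dA : ℝ) + 1 - 2 * m), hdA0]
  · calc ((dA : ℝ) + 1) ^ 2 / (4 * dA)
        = ((((dA + 1) / 2 : ℕ) : ℝ) / dA) * ((dA : ℝ) - (((dA + 1) / 2 : ℕ) : ℝ) + 1) := hval.symm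
      _ ≤ _ := Finset.le_sup' (fun m : ℕ => ((m : ℝ) / dA) * ((dA : ℝ) - m + 1)) hmem
end

section
/- Let d ≥ 2, 1 ≤ N ≤ d, and consider the uniform state A(S) = 1/√C(d,N) over N-subsets S of Fin d. For the one-particle reduced matrix ρ(k,l) := ∑_{T : (N−1)-subsets, k∉T, l∉T} A(T∪{k}) · conj(A(T∪{l})) (k, l ∈ Fin d), one has ρ(k,k) = N/d for all k and ρ(k,l) = N(d−N)/(d(d−1)) for k ≠ l, and the largest eigenvalue of ρ is (N/d)(d − N + 1), with eigenvector (1,…,1)/√d. -/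
/-!
Every product of amplitudes equals `1 / C(d, N)`, so `ρ k l` is the number of `(N-1)`-subsets
avoiding `k` and `l`, divided by `C(d, N)`: this gives `C(d-1, N-1) / C(d, N) = N / d` on the
diagonal and `C(d-2, N-1) / C(d, N) = N (d-N) / (d (d-1))` off it. A matrix with constant
diagonal `a` and constant off-diagonal `b` is `(a - b) I + b J` with `J² = d J`, so it is
annihilated by `(X - (a - b)) (X - (a + (d-1) b))`; its eigenvalues are therefore among
`a - b` and `a + (d-1) b`, the latter being the larger as `b ≥ 0`, with the constant vector
as eigenvector.
-/

open Finset Matrix Polynomial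

theorem Nat.add_two_mul_add_one_mul_choose (n k : ℕ) :
    (n + 2) * (n + 1) * n.choose k = (k + 1) * (n + 1 - k) * (n + 2).choose (k + 1) := by
  have h := Nat.choose_mul_succ_eq (n + 1) (k + 1)
  rw [show n + 1 + 1 - (k + 1) = n + 1 - k by omega] at h
  calc (n + 2) * (n + 1) * n.choose k = (n + 2) * ((n + 1).choose (k + 1) * (k + 1)) := by
        rw [mul_assoc, Nat.add_one_mul_choose_eq]
    _ = (k + 1) * (n + 1 - k) * (n + 2).choose (k + 1) := by
        rw [← mul_assoc, mul_comm _ ((n + 1).choose _), h]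
        ring

section CastChoose

variable {K : Type*} [Field K] [CharZero K] {d N : ℕ}

theorem Nat.cast_choose_pred_div_choose (hN : 1 ≤ N) (hNd : N ≤ d) :
    ((d - 1).choose (N - 1) : K) / d.choose N = N / d := by
  obtain ⟨n, rfl⟩ : ∃ n, d = n + 1 := ⟨d - 1, by omega⟩
  obtain ⟨m, rfl⟩ : ∃ m, N = m + 1 := ⟨N - 1, by omega⟩
  have hC : ((n + 1).choose (m + 1) : K) ≠ 0 := by exact_mod_cast (Nat.choose_pos hNd).ne'
  rw [div_eq_div_iff hC (by exact_mod_cast n.succ_ne_zero)]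
  simp only [Nat.add_sub_cancel]
  exact_mod_cast by rw [mul_comm, Nat.add_one_mul_choose_eq, mul_comm]

theorem Nat.cast_choose_sub_two_div_choose (hd : 2 ≤ d) (hN : 1 ≤ N) (hNd : N ≤ d) :
    ((d - 2).choose (N - 1) : K) / d.choose N = N * (d - N) / (d * (d - 1)) := by
  obtain ⟨n, rfl⟩ : ∃ n, d = n + 2 := ⟨d - 2, by omega⟩
  obtain ⟨m, rfl⟩ : ∃ m, N = m + 1 := ⟨N - 1, by omega⟩
  have hC : ((n + 2).choose (m + 1) : K) ≠ 0 := by exact_mod_cast (Nat.choose_pos hNd).ne'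
  have hdd : ((n + 2 : ℕ) : K) * ((n + 2 : ℕ) - 1) ≠ 0 := by
    rw [show ((n + 2 : ℕ) : K) - 1 = (n + 1 : ℕ) by push_cast; ring]
    exact mul_ne_zero (by exact_mod_cast (n + 1).succ_ne_zero) (by exact_mod_cast n.succ_ne_zero)
  rw [div_eq_div_iff hC hdd]
  have h := congrArg (Nat.cast : ℕ → K) (Nat.add_two_mul_add_one_mul_choose n m)
  push_cast [Nat.cast_sub (show m ≤ n + 1 by omega)] at h ⊢
  linear_combination h

end CastChoose

theorem Finset.filter_powersetCard_notMem_notMem {α : Type*} [Fintype α] [DecidableEq α]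
    (r : ℕ) (k l : α) :
    (powersetCard r univ).filter (fun T => k ∉ T ∧ l ∉ T) = powersetCard r {k, l}ᶜ := by
  ext T
  simp only [mem_filter, mem_powersetCard, subset_univ, true_and, subset_compl_iff_disjoint_right,
    disjoint_insert_right, disjoint_singleton_right, and_comm]

theorem Polynomial.eval_eq_zero_of_mem_spectrum {K A : Type*} [Field K] [Ring A] [Algebra K A]
    {a : A} {p : K[X]} (hp : aeval a p = 0) {μ : K} (hμ : μ ∈ spectrum K a) : p.eval μ = 0 := by
  cases subsingleton_or_nontrivial A with
  | inl _ => simp [spectrum.of_subsingleton] at hμ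
  | inr _ => simpa [hp, spectrum.zero_eq] using spectrum.subset_polynomial_aeval a p ⟨μ, hμ, rfl⟩

section ConstDiagConstOffDiag

variable {K ι : Type*} [Field K] [Fintype ι] [DecidableEq ι]

theorem Fintype.sum_ite_eq_add_card_sub_one_mul (a b : K) (i : ι) :
    ∑ j, (if i = j then a else b) = a + (Fintype.card ι - 1) * b := by
  rw [← Finset.add_sum_erase _ _ (mem_univ i), if_pos rfl,
    Finset.sum_congr rfl (fun j hj => if_neg (Finset.ne_of_mem_erase hj).symm)]
  simp [Finset.card_erase_of_mem, Nat.cast_sub (Fintype.card_pos_iff.2 ⟨i⟩)]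

theorem Matrix.ite_mulVec_const (a b c : K) :
    (of fun i j : ι => if i = j then a else b) *ᵥ (fun _ => c)
      = (a + (Fintype.card ι - 1) * b) • fun _ => c := by
  ext i
  simp [mulVec, dotProduct, Fintype.sum_ite_eq_add_card_sub_one_mul]
  ring

theorem Matrix.ite_sub_smul_one_mul_ite_sub_smul_one (a b : K) :
    ((of fun i j : ι => if i = j then a else b) - (a - b) • 1) *
      ((of fun i j : ι => if i = j then a else b) - (a + (Fintype.card ι - 1) * b) • 1) = 0 := by
  ext i j
  have hrow : ∀ m, ((of fun i j : ι => if i = j then a else b) - (a - b) • 1) i m = b := by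
    intro m
    by_cases h : i = m <;> simp [h]
  have hcol : ∑ m, ((of fun i j : ι => if i = j then a else b) -
      (a + (Fintype.card ι - 1) * b) • 1) m j = 0 := by
    simp [Finset.sum_sub_distrib, one_apply, eq_comm (b := j),
      Fintype.sum_ite_eq_add_card_sub_one_mul]
  rw [mul_apply, Finset.sum_congr rfl fun m _ => by rw [hrow], ← Finset.mul_sum, hcol]
  simp

theorem Matrix.spectrum_ite_subset (a b : K) :
    spectrum K (of fun i j : ι => if i = j then a else b)
      ⊆ {a - b, a + (Fintype.card ι - 1) * b} := by
  intro μ hμ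
  have hp : aeval (of fun i j : ι => if i = j then a else b)
      ((X - C (a - b)) * (X - C (a + (Fintype.card ι - 1) * b))) = 0 := by
    rw [map_mul, aeval_sub, aeval_sub, aeval_X, aeval_C, aeval_C, Algebra.algebraMap_eq_smul_one,
      Algebra.algebraMap_eq_smul_one]
    exact Matrix.ite_sub_smul_one_mul_ite_sub_smul_one a b
  have hroot := Polynomial.eval_eq_zero_of_mem_spectrum hp hμ
  simp only [eval_mul, eval_sub, eval_X, eval_C, mul_eq_zero, sub_eq_zero] at hroot
  simpa using hroot

end ConstDiagConstOffDiag

theorem stmt17 (d N : ℕ) (hd : 2 ≤ d) (hN1 : 1 ≤ N) (hNd : N ≤ d)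
    (A : Finset (Fin d) → ℂ) (hA : ∀ S, A S = ((1 / Real.sqrt (d.choose N) : ℝ) : ℂ))
    (ρ : Matrix (Fin d) (Fin d) ℂ)
    (hρ : ∀ k l, ρ k l =
      ∑ T ∈ (Finset.powersetCard (N - 1) (Finset.univ : Finset (Fin d))).filter
          (fun T => k ∉ T ∧ l ∉ T),
        A (insert k T) * (starRingEnd ℂ) (A (insert l T))) :
    (∀ k, ρ k k = ((N : ℂ) / d)) ∧
    (∀ k l, k ≠ l → ρ k l = (N : ℂ) * ((d : ℂ) - N) / ((d : ℂ) * ((d : ℂ) - 1))) ∧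
    (ρ.mulVec (fun _ => ((1 / Real.sqrt d : ℝ) : ℂ))
      = (((N : ℂ) / d) * ((d : ℂ) - N + 1)) • (fun _ => ((1 / Real.sqrt d : ℝ) : ℂ))) ∧
    (∀ μ : ℝ, (μ : ℂ) ∈ spectrum ℂ ρ → μ ≤ ((N : ℝ) / d) * ((d : ℝ) - N + 1)) := by
  have hentry : ∀ k l, ρ k l = (((d - #{k, l}).choose (N - 1) / d.choose N : ℝ) : ℂ) := by
    intro k l
    simp only [hρ, hA, Complex.conj_ofReal, ← Complex.ofReal_mul, div_mul_div_comm, one_mul,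
      Real.mul_self_sqrt (Nat.cast_nonneg _), sum_const, filter_powersetCard_notMem_notMem,
      card_powersetCard, card_compl, Fintype.card_fin]
    push_cast
    ring
  have hρ_eq : ρ = of fun k l => if k = l then ((N / d : ℝ) : ℂ) else
      ((N * (d - N) / (d * (d - 1)) : ℝ) : ℂ) := by
    ext k l
    rw [hentry, of_apply]
    split_ifs with hkl
    · rw [hkl, pair_eq_singleton, card_singleton, Nat.cast_choose_pred_div_choose hN1 hNd]
    · rw [card_pair hkl, Nat.cast_choose_sub_two_div_choose hd hN1 hNd]
  have hd' : (2 : ℝ) ≤ d := by exact_mod_cast hd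
  have hNd' : (N : ℝ) ≤ d := by exact_mod_cast hNd
  have htop : (N / d : ℝ) + (d - 1) * (N * (d - N) / (d * (d - 1))) = N / d * (d - N + 1) := by
    have : (d : ℝ) - 1 ≠ 0 := by linarith
    field_simp
    ring
  refine ⟨fun k => by simp [hρ_eq], fun k l hkl => by simp [hρ_eq, hkl], ?_, fun μ hμ => ?_⟩
  · rw [hρ_eq, ite_mulVec_const, Fintype.card_fin]
    congr 1
    have := congrArg (fun x : ℝ => (x : ℂ)) htop
    push_cast at this ⊢
    exact this
  · have hb : (0 : ℝ) ≤ d * (N * (d - N) / (d * (d - 1))) :=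
      mul_nonneg (by positivity) <|
        div_nonneg (mul_nonneg (by positivity) (by linarith)) (by nlinarith)
    rw [hρ_eq] at hμ
    have hμ' := spectrum_ite_subset _ _ hμ
    simp only [Set.mem_insert_iff, Set.mem_singleton_iff, Fintype.card_fin] at hμ'
    rcases hμ' with h | h
    · have h : μ = N / d - N * (d - N) / (d * (d - 1)) := by exact_mod_cast h
      linarith
    · have h : μ = N / d + (d - 1) * (N * (d - N) / (d * (d - 1))) := by exact_mod_cast h
      linarith
end
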